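/- Let G be a finite group that possesses an irreducible finite-dimensional complex representation of dimension greater than 1. Then for every character χ of a finite-dimensional complex representation of G there exist finitely many proper subgroups H_1, …, H_k of G, characters φ_j of finite-dimensional complex representations of H_j, and rational numbers λ_1, …, λ_k such that for all g ∈ G, χ(g) = ∑_{j=1}^k λ_j (Ind_{H_j}^G φ_j)(g). -/

import Mathlib

noncomputable instance subgroupFintypeOfFintype {G : Type*} [Group G] [Fintype G] :
    Fintype (Subgroup G) :=
  Fintype.ofFinite _

lemma artin_subgroup_card_lt {G : Type*} [Group G] [Fintype G] {D C : Subgroup G}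
    (h : D < C) : Nat.card D < Nat.card C := by
  have hs : (D : Set G) ⊂ (C : Set G) := by
    rw [Set.ssubset_iff_of_subset (by exact_mod_cast h.le)]
    obtain ⟨x, hxC, hxD⟩ := SetLike.exists_of_lt h
    exact ⟨x, hxC, hxD⟩
  have h2 := Set.ncard_lt_ncard hs (Set.toFinite _)
  rw [← Nat.card_coe_set_eq, ← Nat.card_coe_set_eq] at h2
  exact h2

open Classical in
lemma artin_moebius {G : Type*} [Group G] [Fintype G] (C : Subgroup G) :
    ∃ a : Subgroup G → ℚ, (∀ D, a D ≠ 0 → D ≤ C) ∧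
      ∀ y : G, (if Subgroup.zpowers y = C then (1 : ℂ) else 0)
        = ∑ D : Subgroup G, (a D : ℂ) * (if y ∈ D then 1 else 0) := by
  have key : ∀ n : ℕ, ∀ C : Subgroup G, Nat.card C ≤ n →
      ∃ a : Subgroup G → ℚ, (∀ D, a D ≠ 0 → D ≤ C) ∧
      ∀ y : G, (if Subgroup.zpowers y = C then (1 : ℂ) else 0)
        = ∑ D : Subgroup G, (a D : ℂ) * (if y ∈ D then 1 else 0) := by
    intro n
    induction n with
    | zero =>
        intro C hC
        exact absurd hC (by simpa using Nat.card_pos (α := C))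
    | succ n ih =>
        intro C hC
        have ihD : ∀ D : Subgroup G, D < C →
            ∃ a : Subgroup G → ℚ, (∀ E, a E ≠ 0 → E ≤ D) ∧
            ∀ y : G, (if Subgroup.zpowers y = D then (1 : ℂ) else 0)
              = ∑ E : Subgroup G, (a E : ℂ) * (if y ∈ E then 1 else 0) :=
          fun D hD => ih D (by have := artin_subgroup_card_lt hD; omega)
        choose b hb1 hb2 using ihD
        refine ⟨fun E => (if E = C then 1 else 0)
          - ∑ D : Subgroup G, if h : D < C then b D h E else 0, ?_, ?_⟩
        · intro E hE
          by_contra hEC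
          apply hE
          have h1 : (if E = C then (1:ℚ) else 0) = 0 := by
            rw [if_neg]; rintro rfl; exact hEC le_rfl
          have h2 : ∀ D : Subgroup G, (if h : D < C then b D h E else 0) = 0 := by
            intro D
            split
            · next h =>
                by_contra hne
                exact hEC ((hb1 D h E hne).trans h.le)
            · rfl
          dsimp only
          rw [h1, Finset.sum_eq_zero fun D _ => h2 D, sub_zero]
        · intro y
          push_cast [apply_ite (fun q : ℚ => (q : ℂ)), apply_dite (fun q : ℚ => (q : ℂ))]
          simp only [sub_mul, Finset.sum_mul, Finset.sum_sub_distrib, ite_mul, dite_mul,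
            one_mul, zero_mul]
          rw [Finset.sum_ite_eq' Finset.univ C (fun E => (if y ∈ E then (1:ℂ) else 0))]
          simp only [Finset.mem_univ, if_true]
          rw [Finset.sum_comm]
          have hsw : ∀ D : Subgroup G,
              (∑ E : Subgroup G, if h : D < C then (b D h E : ℂ) * (if y ∈ E then 1 else 0)
                  else 0)
              = if D < C then (if Subgroup.zpowers y = D then (1:ℂ) else 0) else 0 := by
            intro D
            split
            · next h =>
                rw [hb2 D h y]
            · next h =>
                exact Finset.sum_eq_zero fun E _ => by simp [h]
          rw [Finset.sum_congr rfl fun D _ => hsw D]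
          have hlt : (∑ D : Subgroup G, if D < C then
              (if Subgroup.zpowers y = D then (1:ℂ) else 0) else 0)
              = if Subgroup.zpowers y < C then 1 else 0 := by
            have hterm : ∀ D : Subgroup G,
                (if D < C then (if Subgroup.zpowers y = D then (1:ℂ) else 0) else 0)
                = if D = Subgroup.zpowers y ∧ Subgroup.zpowers y < C then 1 else 0 := by
              intro D
              by_cases h2 : Subgroup.zpowers y = D
              · cases h2
                by_cases h1 : Subgroup.zpowers y < C <;> simp [h1]
              · have h2' : ¬ D = Subgroup.zpowers y := fun h => h2 h.symm
                simp [h2, h2']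
            rw [Finset.sum_congr rfl fun D _ => hterm D]
            by_cases hyC : Subgroup.zpowers y < C
            · simp [hyC]
            · simp [hyC]
          rw [hlt]
          have hmem : y ∈ C ↔ Subgroup.zpowers y ≤ C := (Subgroup.zpowers_le).symm
          by_cases h1 : Subgroup.zpowers y = C
          · rw [if_pos h1, if_pos (hmem.mpr h1.le), if_neg (by simp [h1])]
            ring
          · by_cases h2 : Subgroup.zpowers y < C
            · rw [if_neg h1, if_pos (hmem.mpr h2.le), if_pos h2]; ring
            · have : ¬ y ∈ C := fun hy => (lt_or_eq_of_le (hmem.mp hy)).elim h2 h1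
              rw [if_neg h1, if_neg this, if_neg h2]; ring
  exact key (Nat.card C) C le_rfl

lemma artin_not_cyclic {G : Type*} [Group G] [Fintype G]
    (hirr : ∃ (V : Type) (_ : AddCommGroup V) (_ : Module ℂ V)
      (_ : FiniteDimensional ℂ V) (ρ : Representation ℂ G V),
      1 < Module.finrank ℂ V ∧
      ∀ W : Submodule ℂ V, (∀ g : G, ∀ w ∈ W, ρ g w ∈ W) → W = ⊥ ∨ W = ⊤) :
    ∀ y : G, Subgroup.zpowers y ≠ ⊤ := by
  intro y hy
  obtain ⟨V, _, _, _, ρ, hdim, hsub⟩ := hirr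
  have hab : ∀ a b : G, Commute a b := by
    intro a b
    have ha : a ∈ Subgroup.zpowers y := hy ▸ Subgroup.mem_top a
    have hb : b ∈ Subgroup.zpowers y := hy ▸ Subgroup.mem_top b
    obtain ⟨m, rfl⟩ := ha
    obtain ⟨n, rfl⟩ := hb
    exact Commute.zpow_zpow (Commute.refl y) m n
  haveI : Nontrivial V := Module.nontrivial_of_finrank_pos (R := ℂ)
    (lt_trans zero_lt_one hdim)
  have scalar : ∀ g : G, ∃ μ : ℂ, ∀ v : V, ρ g v = μ • v := by
    intro g
    obtain ⟨μ, hμ⟩ := Module.End.exists_eigenvalue (ρ g)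
    have hinv : ∀ h : G, ∀ w ∈ Module.End.eigenspace (ρ g) μ,
        ρ h w ∈ Module.End.eigenspace (ρ g) μ := by
      intro h w hw
      rw [Module.End.mem_eigenspace_iff] at hw ⊢
      have hc : ρ g (ρ h w) = ρ h (ρ g w) := by
        rw [← Module.End.mul_apply, ← Module.End.mul_apply, ← map_mul, ← map_mul,
          (hab g h).eq]
      rw [hc, hw, map_smul]
    have hW : Module.End.eigenspace (ρ g) μ = ⊤ := by
      rcases hsub _ hinv with h | h
      · exact absurd h hμ
      · exact h
    exact ⟨μ, fun v => Module.End.mem_eigenspace_iff.mp (hW ▸ Submodule.mem_top)⟩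
  obtain ⟨v, hv⟩ := exists_ne (0 : V)
  have hL : ∀ g : G, ∀ w ∈ Submodule.span ℂ {v}, ρ g w ∈ Submodule.span ℂ {v} := by
    intro g w hw
    obtain ⟨μ, hμ⟩ := scalar g
    rw [hμ w]
    exact Submodule.smul_mem _ _ hw
  rcases hsub _ hL with h | h
  · exact hv (by simpa using (Submodule.span_eq_bot.mp h) v rfl)
  · have h1 : Module.finrank ℂ (Submodule.span ℂ {v}) = 1 := finrank_span_singleton hv
    rw [h, finrank_top] at h1
    omega

/-- Traces of representations are class functions. -/
lemma artin_trace_conj {G : Type*} [Group G] {V : Type*} [AddCommGroup V] [Module ℂ V]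
    [FiniteDimensional ℂ V] (ρ : Representation ℂ G V) (g x : G) :
    LinearMap.trace ℂ V (ρ (x⁻¹ * g * x)) = LinearMap.trace ℂ V (ρ g) := by
  have hu : ρ x⁻¹ * ρ x = 1 := by rw [← map_mul, inv_mul_cancel, map_one]
  have hu' : ρ x * ρ x⁻¹ = 1 := by rw [← map_mul, mul_inv_cancel, map_one]
  let u : (V →ₗ[ℂ] V)ˣ := ⟨ρ x⁻¹, ρ x, hu, hu'⟩
  have : ρ (x⁻¹ * g * x) = ↑u * ρ g * ↑u⁻¹ := by
    simp only [map_mul, u, Units.inv_mk]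
  rw [this, LinearMap.trace_conj]

/-- Restriction of a representation to a subgroup has a model in `Type 0` with the
same character. -/
lemma artin_restrict_exists {G : Type*} [Group G] {V : Type*} [AddCommGroup V]
    [Module ℂ V] [FiniteDimensional ℂ V] (ρ : Representation ℂ G V) (K : Subgroup G) :
    ∃ (W : Type) (_ : AddCommGroup W) (_ : Module ℂ W)
      (_ : FiniteDimensional ℂ W) (σ : Representation ℂ K W),
      ∀ h : K, LinearMap.trace ℂ V (ρ ↑h) = LinearMap.trace ℂ W (σ h) := by
  set n := Module.finrank ℂ V
  let b : Module.Basis (Fin n) ℂ V := Module.finBasis ℂ V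
  let e : V ≃ₗ[ℂ] (Fin n → ℂ) := b.equivFun
  refine ⟨Fin n → ℂ, inferInstance, inferInstance, inferInstance,
    { toFun := fun h => e.conj (ρ (↑h : G))
      map_one' := by
        simp only [OneMemClass.coe_one, map_one]
        rw [Module.End.one_eq_id, LinearEquiv.conj_id]
        rfl
      map_mul' := by
        intro h1 h2
        simp only [Subgroup.coe_mul, map_mul]
        rw [Module.End.mul_eq_comp, LinearEquiv.conj_comp]
        rfl }, ?_⟩
  intro h
  exact (LinearMap.trace_conj' (ρ (↑h : G)) e).symm

open Classical in
/-- The class function on `G` induced from a function `φ : H → ℂ` on a subgroup `H`: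
`(Ind_H^G φ)(g) = (1/|H|) ∑_{x ∈ G, x⁻¹gx ∈ H} φ(x⁻¹gx)`. -/
noncomputable def inducedFun {G : Type*} [Group G] [Fintype G] (H : Subgroup G)
    (φ : H → ℂ) (g : G) : ℂ :=
  (Nat.card H : ℂ)⁻¹ * ∑ x : G, if h : x⁻¹ * g * x ∈ H then φ ⟨x⁻¹ * g * x, h⟩ else 0

/-- weak version of Artin's induction theorem: if a finite group `G`
has an irreducible finite-dimensional complex representation of dimension `> 1`
(irreducibility phrased as: only invariant subspaces are `⊥` and `⊤`), then the
character of every finite-dimensional complex representation of `G` is a rational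
linear combination of class functions induced from characters of finite-dimensional
complex representations of proper subgroups of `G`. -/
theorem artin_induction_weak
    {G : Type*} [Group G] [Fintype G]
    (hirr : ∃ (V : Type) (_ : AddCommGroup V) (_ : Module ℂ V)
      (_ : FiniteDimensional ℂ V) (ρ : Representation ℂ G V),
      1 < Module.finrank ℂ V ∧
      ∀ W : Submodule ℂ V, (∀ g : G, ∀ w ∈ W, ρ g w ∈ W) → W = ⊥ ∨ W = ⊤)
    (V : Type*) [AddCommGroup V] [Module ℂ V] [FiniteDimensional ℂ V]
    (ρ : Representation ℂ G V) :
    ∃ (k : ℕ) (H : Fin k → Subgroup G) (φ : ∀ j, (H j) → ℂ) (lam : Fin k → ℚ),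
      (∀ j, H j ≠ ⊤) ∧
      (∀ j, ∃ (W : Type) (_ : AddCommGroup W) (_ : Module ℂ W)
        (_ : FiniteDimensional ℂ W) (σ : Representation ℂ (H j) W),
        ∀ h : (H j), φ j h = LinearMap.trace ℂ W (σ h)) ∧
      ∀ g : G, LinearMap.trace ℂ V (ρ g) =
        ∑ j, (lam j : ℂ) * inducedFun (H j) (φ j) g := by
  classical
  have hnc := artin_not_cyclic hirr
  have hbot : (⊥ : Subgroup G) ≠ ⊤ := by
    intro h
    exact hnc 1 (by rw [Subgroup.zpowers_one_eq_bot]; exact h)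
  choose a ha1 ha2 using fun C : Subgroup G => artin_moebius C
  set χ : G → ℂ := fun g => LinearMap.trace ℂ V (ρ g) with hχ
  have hclass : ∀ g x : G, χ (x⁻¹ * g * x) = χ g := fun g x => artin_trace_conj ρ g x
  set k := Fintype.card (Subgroup G × Subgroup G) with hk
  set e : Fin k ≃ Subgroup G × Subgroup G := (Fintype.equivFin _).symm with he
  set cond : Subgroup G × Subgroup G → Prop := fun p => p.2 ≤ p.1 ∧ p.1 ≠ ⊤ with hcond
  refine ⟨k, fun j => if cond (e j) then (e j).2 else ⊥,
    fun j d => χ ↑d,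
    fun j => if cond (e j) then
      a (e j).1 (e j).2 * (Nat.card (e j).2 : ℚ) / (Fintype.card G : ℚ) else 0,
    ?_, ?_, ?_⟩
  · intro j
    show (if cond (e j) then (e j).2 else ⊥) ≠ ⊤
    split
    · next h =>
        intro htop
        exact h.2 (top_le_iff.mp (htop ▸ h.1))
    · exact hbot
  · intro j
    obtain ⟨W, i1, i2, i3, σ, hσ⟩ := artin_restrict_exists ρ
      (if cond (e j) then (e j).2 else ⊥)
    exact ⟨W, i1, i2, i3, σ, fun h => hσ h⟩
  · intro g
    -- abbreviations
    set S : Subgroup G → ℂ :=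
      fun D => ∑ x : G, if x⁻¹ * g * x ∈ D then χ (x⁻¹ * g * x) else 0 with hS
    have hInd : ∀ D : Subgroup G,
        inducedFun D (fun d => χ ↑d) g = (Nat.card D : ℂ)⁻¹ * S D := by
      intro D
      show inducedFun D (fun d => χ ↑d) g = (Nat.card D : ℂ)⁻¹ *
        ∑ x : G, if x⁻¹ * g * x ∈ D then χ (x⁻¹ * g * x) else 0
      unfold inducedFun
      congr 1
    set F : Subgroup G × Subgroup G → ℂ := fun p =>
      ((if cond p then
        a p.1 p.2 * (Nat.card p.2 : ℚ) / (Fintype.card G : ℚ) else 0 : ℚ) : ℂ) *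
        inducedFun (if cond p then p.2 else ⊥) (fun d => χ ↑d) g with hF
    have hstep : (∑ j : Fin k, ((if cond (e j) then
        a (e j).1 (e j).2 * (Nat.card (e j).2 : ℚ) / (Fintype.card G : ℚ) else 0 : ℚ) : ℂ) *
        inducedFun (if cond (e j) then (e j).2 else ⊥) (fun d => χ ↑d) g)
        = ∑ p : Subgroup G × Subgroup G, F p := by
      rw [← Equiv.sum_comp e F]
    rw [hstep]
    have hcardG : (Fintype.card G : ℂ) ≠ 0 := by
      exact_mod_cast Fintype.card_ne_zero
    have hFval : ∀ p : Subgroup G × Subgroup G, p.1 ≠ ⊤ →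
        F p = (a p.1 p.2 : ℂ) * (Fintype.card G : ℂ)⁻¹ * S p.2 := by
      intro p htop
      by_cases hle : p.2 ≤ p.1
      · have hc : cond p := ⟨hle, htop⟩
        have hif1 : (if cond p then
            a p.1 p.2 * (Nat.card p.2 : ℚ) / (Fintype.card G : ℚ) else 0)
            = a p.1 p.2 * (Nat.card p.2 : ℚ) / (Fintype.card G : ℚ) := if_pos hc
        have hif2 : (if cond p then p.2 else ⊥) = p.2 := if_pos hc
        have hcard : (Nat.card p.2 : ℂ) ≠ 0 := Nat.cast_ne_zero.mpr Nat.card_pos.ne'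
        have hcardF : (Fintype.card p.2 : ℂ) ≠ 0 := Nat.cast_ne_zero.mpr Fintype.card_ne_zero
        rw [hF]
        dsimp only
        rw [hif1, hif2, hInd p.2]
        push_cast
        field_simp
      · have hc : ¬ cond p := fun h => hle h.1
        have ha0 : a p.1 p.2 = 0 := by
          by_contra h
          exact hle (ha1 p.1 p.2 h)
        rw [hF]
        simp [hc, ha0]
    have hFtop : ∀ p : Subgroup G × Subgroup G, p.1 = ⊤ → F p = 0 := by
      intro p htop
      have hc : ¬ cond p := fun h => h.2 htop
      rw [hF]
      simp [hc]
    rw [Fintype.sum_prod_type]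
    have hinner : ∀ C : Subgroup G, (∑ D : Subgroup G, F (C, D))
        = if C = ⊤ then 0 else (Fintype.card G : ℂ)⁻¹ *
            ∑ x : G, (if Subgroup.zpowers (x⁻¹ * g * x) = C then χ (x⁻¹ * g * x) else 0) := by
      intro C
      by_cases htop : C = ⊤
      · rw [if_pos htop]
        exact Finset.sum_eq_zero fun D _ => hFtop (C, D) htop
      · rw [if_neg htop]
        rw [Finset.sum_congr rfl fun D _ => hFval (C, D) htop]
        have hre : (∑ D : Subgroup G, (a C D : ℂ) * (Fintype.card G : ℂ)⁻¹ * S D)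
            = (Fintype.card G : ℂ)⁻¹ * ∑ D : Subgroup G, (a C D : ℂ) * S D := by
          rw [Finset.mul_sum]
          exact Finset.sum_congr rfl fun D _ => by ring
        rw [hre]
        congr 1
        have expand : ∀ D : Subgroup G, (a C D : ℂ) * S D
            = ∑ x : G, (a C D : ℂ) * (if x⁻¹ * g * x ∈ D then χ (x⁻¹ * g * x) else 0) :=
          fun D => Finset.mul_sum _ _ _
        rw [Finset.sum_congr rfl fun D _ => expand D, Finset.sum_comm]
        refine Finset.sum_congr rfl fun x _ => ?_
        have h1 : ∀ D : Subgroup G,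
            (a C D : ℂ) * (if x⁻¹ * g * x ∈ D then χ (x⁻¹ * g * x) else 0)
            = ((a C D : ℂ) * (if x⁻¹ * g * x ∈ D then 1 else 0)) * χ (x⁻¹ * g * x) := by
          intro D
          split_ifs <;> ring
        rw [Finset.sum_congr rfl fun D _ => h1 D, ← Finset.sum_mul, ← ha2 C (x⁻¹ * g * x)]
        split_ifs <;> ring
    rw [Finset.sum_congr rfl fun C _ => hinner C]
    have h2 : ∀ C : Subgroup G,
        (if C = ⊤ then (0:ℂ) else (Fintype.card G : ℂ)⁻¹ *
          ∑ x : G, (if Subgroup.zpowers (x⁻¹ * g * x) = C then χ (x⁻¹ * g * x) else 0))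
        = (Fintype.card G : ℂ)⁻¹ * ∑ x : G,
            (if C = Subgroup.zpowers (x⁻¹ * g * x) then χ (x⁻¹ * g * x) else 0) := by
      intro C
      by_cases htop : C = ⊤
      · rw [if_pos htop]
        have : ∀ x : G, (if C = Subgroup.zpowers (x⁻¹ * g * x)
            then χ (x⁻¹ * g * x) else (0:ℂ)) = 0 := by
          intro x
          rw [if_neg]
          intro h
          exact hnc (x⁻¹ * g * x) (h ▸ htop)
        rw [Finset.sum_congr rfl fun x _ => this x, Finset.sum_const, smul_zero, mul_zero]
      · rw [if_neg htop]
        congr 1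
        refine Finset.sum_congr rfl fun x _ => ?_
        by_cases h : Subgroup.zpowers (x⁻¹ * g * x) = C
        · rw [if_pos h, if_pos h.symm]
        · rw [if_neg h, if_neg fun h' => h h'.symm]
    rw [Finset.sum_congr rfl fun C _ => h2 C, ← Finset.mul_sum, Finset.sum_comm]
    have h3 : ∀ x : G, (∑ C : Subgroup G,
        (if C = Subgroup.zpowers (x⁻¹ * g * x) then χ (x⁻¹ * g * x) else 0)) = χ g := by
      intro x
      rw [Finset.sum_ite_eq' Finset.univ (Subgroup.zpowers (x⁻¹ * g * x))
        (fun _ => χ (x⁻¹ * g * x))]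
      simp only [Finset.mem_univ, if_true]
      exact hclass g x
    rw [Finset.sum_congr rfl fun x _ => h3 x, Finset.sum_const, Finset.card_univ,
      nsmul_eq_mul, ← mul_assoc, inv_mul_cancel₀ hcardG, one_mul]
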